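/- arXiv:2001.06977 — 4 statements merged into one kernel-verified Lean document; each statement's English description precedes it below -/
import Mathlib

section
/- (Sieve inequality) Let q be a power of an odd prime, m ≥ 2, and fix f(x) = a·x^2 + b·x + c with a, b, c ∈ F_{q^m}, a ≠ 0 and b^2 − 4ac ≠ 0. Let d be a divisor of q^m − 1 and let p_1, …, p_n be the distinct primes dividing q^m − 1 but not d. Let g be a monic divisor of x^m − 1 in F_q[x] and let g_1, …, g_k be the distinct monic irreducible polynomials dividing x^m − 1 but not g. Write N(e_1, e_2, h) for the number of α ∈ F_{q^m} with α simultaneously e_1-free and h-free and f(α) e_2-free, and abbreviate N := N(q^m − 1, q^m − 1, x^m − 1). Then N ≥ Σ_{i=1}^{n} N(p_i·d, d, g) + Σ_{i=1}^{n} N(d, p_i·d, g) + Σ_{i=1}^{k} N(d, d, g_i·g) − (2n + k − 1)·N(d, d, g). -/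
/-! An element counted by `N(d, d, g)` that passes each of the `2n + k` refined conditions
(`p_i d`-freeness of `α` or of `f(α)`, `g_i g`-freeness of `α`) is counted by `N`: a prime `ℓ`
obstructing `(q^m - 1)`-freeness either divides `d` or is some `p_i`, and likewise a monic
irreducible obstructing `(x^m - 1)`-freeness divides `g` or is some `g_i`. Hence, pointwise,
`1_N ≥ Σ_i 1_{refined i} - (2n + k - 1) 1_{N(d,d,g)}`; summing over `α` gives the inequality. -/

open Polynomial

/-- For `e ∣ q^m - 1`, a nonzero element `α` of `F_{q^m}` is *e-free* if whenever `d ∣ e` and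
`α = β^d` for some `β`, then `d = 1`. -/
def IsEFree {K : Type*} [Field K] (e : ℕ) (α : K) : Prop :=
  α ≠ 0 ∧ ∀ d : ℕ, d ∣ e → (∃ β : K, α = β ^ d) → d = 1

/-- The additive `F_q[x]`-module action on `F_{q^m}`: `h ∘ α = Σ aᵢ α^{qⁱ}` for
`h = Σ aᵢ xⁱ ∈ F_q[x]`. -/
noncomputable def polyAct (F : Type*) {K : Type*} [Field F] [Fintype F] [Field K] [Algebra F K]
    (h : Polynomial F) (α : K) : K :=
  h.sum fun i a => algebraMap F K a * α ^ (Fintype.card F) ^ i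

/-- For a monic divisor `g` of `x^m - 1`, an element `α ∈ F_{q^m}` is *g-free* if whenever
`h` is a monic divisor of `g` and `α = h ∘ β` for some `β`, then `h = 1`. -/
def IsGFree (F : Type*) {K : Type*} [Field F] [Fintype F] [Field K] [Algebra F K]
    (g : Polynomial F) (α : K) : Prop :=
  ∀ h : Polynomial F, h.Monic → h ∣ g → (∃ β : K, α = polyAct F h β) → h = 1

/-- `NCount F a b c e₁ e₂ g` is the number of `α ∈ K` such that `α` is `e₁`-free and `g`-free
and `f(α) = a α² + b α + c` is `e₂`-free. -/
noncomputable def NCount (F : Type*) {K : Type*} [Field F] [Fintype F] [Field K] [Algebra F K]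
    (a b c : K) (e₁ e₂ : ℕ) (g : Polynomial F) : ℕ :=
  Nat.card {α : K // IsEFree e₁ α ∧ IsGFree F g α ∧ IsEFree e₂ (a * α ^ 2 + b * α + c)}

section Freeness

variable {F K : Type*} [Field F] [Fintype F] [Field K] [Algebra F K]

theorem IsEFree.mono {e₁ e₂ : ℕ} (h : e₁ ∣ e₂) {α : K} (H : IsEFree e₂ α) : IsEFree e₁ α :=
  ⟨H.1, fun d hd => H.2 d (hd.trans h)⟩

theorem IsGFree.mono {g₁ g₂ : F[X]} (h : g₁ ∣ g₂) {α : K} (H : IsGFree F g₂ α) :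
    IsGFree F g₁ α :=
  fun h' hm hd => H h' hm (hd.trans h)

theorem isEFree_iff_forall_prime {e : ℕ} {α : K} :
    IsEFree e α ↔ α ≠ 0 ∧ ∀ ℓ : ℕ, ℓ.Prime → ℓ ∣ e → ¬ ∃ β : K, α = β ^ ℓ := by
  refine ⟨fun H => ⟨H.1, fun ℓ hℓ hℓe hpow => hℓ.ne_one (H.2 ℓ hℓe hpow)⟩,
    fun ⟨hα, H⟩ => ⟨hα, fun d hde ⟨β, hβ⟩ => ?_⟩⟩
  by_contra hd
  obtain ⟨ℓ, hℓ, hℓd⟩ := Nat.exists_prime_and_dvd hd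
  exact H ℓ hℓ (hℓd.trans hde) ⟨β ^ (d / ℓ), by rw [hβ, ← pow_mul, Nat.div_mul_cancel hℓd]⟩

theorem IsEFree.of_forall_mul {ι : Type*} {e M : ℕ} {α : K} (p : ι → ℕ)
    (hp : ∀ ℓ : ℕ, ℓ.Prime → ℓ ∣ M → ¬ ℓ ∣ e → ∃ i, p i = ℓ) (H : IsEFree e α)
    (Hp : ∀ i, IsEFree (p i * e) α) : IsEFree M α := by
  refine isEFree_iff_forall_prime.2 ⟨H.1, fun ℓ hℓ hℓM => ?_⟩
  by_cases hℓe : ℓ ∣ e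
  · exact (isEFree_iff_forall_prime.1 H).2 ℓ hℓ hℓe
  · obtain ⟨i, rfl⟩ := hp ℓ hℓ hℓM hℓe
    exact (isEFree_iff_forall_prime.1 (Hp i)).2 _ hℓ (dvd_mul_right _ e)

theorem polyAct_eq_aeval (h : F[X]) (α : K) :
    polyAct F h α = aeval (FiniteField.frobeniusAlgHom F K).toLinearMap h α := by
  rw [polyAct, aeval_eq_sum_range, LinearMap.sum_apply, Polynomial.sum_over_range]
  · refine Finset.sum_congr rfl fun i _ => ?_
    rw [LinearMap.smul_apply, Module.End.pow_apply, Algebra.smul_def]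
    simp [FiniteField.coe_frobeniusAlgHom]
  · simp

theorem polyAct_mul (h₁ h₂ : F[X]) (α : K) :
    polyAct F (h₁ * h₂) α = polyAct F h₁ (polyAct F h₂ α) := by
  simp only [polyAct_eq_aeval, map_mul, Module.End.mul_apply]

theorem isGFree_iff_forall_irreducible {g : F[X]} {α : K} :
    IsGFree F g α ↔
      ∀ π : F[X], π.Monic → Irreducible π → π ∣ g → ¬ ∃ β : K, α = polyAct F π β := by
  refine ⟨fun H π hπ hπirr hπg hα => hπirr.not_isUnit (H π hπ hπg hα ▸ isUnit_one),
    fun H h hh hhg ⟨β, hβ⟩ => ?_⟩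
  by_contra h1
  obtain ⟨π, hπ, hπirr, t, rfl⟩ :=
    exists_monic_irreducible_factor h fun hu => h1 (hh.eq_one_of_isUnit hu)
  exact H π hπ hπirr ((dvd_mul_right π t).trans hhg) ⟨polyAct F t β, by rw [hβ, polyAct_mul]⟩

theorem IsGFree.of_forall_mul {ι : Type*} {g G : F[X]} {α : K} (π : ι → F[X])
    (hπ : ∀ h : F[X], h.Monic → Irreducible h → h ∣ G → ¬ h ∣ g → ∃ i, π i = h)
    (H : IsGFree F g α) (Hπ : ∀ i, IsGFree F (π i * g) α) : IsGFree F G α := by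
  refine isGFree_iff_forall_irreducible.2 fun h hh hhirr hhG => ?_
  by_cases hhg : h ∣ g
  · exact isGFree_iff_forall_irreducible.1 H h hh hhirr hhg
  · obtain ⟨i, rfl⟩ := hπ h hh hhirr hhG hhg
    exact isGFree_iff_forall_irreducible.1 (Hπ i) _ hh hhirr (dvd_mul_right _ g)

end Freeness

theorem sum_ite_sub_mul_ite_le_ite {ι : Type*} [Fintype ι] {b t : Prop} [Decidable b]
    [Decidable t] {q : ι → Prop} [DecidablePred q] (hqb : ∀ i, q i → b)
    (ht : b → (∀ i, q i) → t) :
    ∑ i, (if q i then 1 else 0 : ℤ) - (Fintype.card ι - 1) * (if b then 1 else 0) ≤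
      if t then 1 else 0 := by
  have ht0 : (0 : ℤ) ≤ if t then 1 else 0 := by split_ifs <;> norm_num
  rw [← Finset.natCast_card_filter]
  by_cases hb : b
  · by_cases hq : ∀ i, q i
    · simp [hb, hq, ht hb hq]
    · have hlt : (Finset.univ.filter fun i => q i).card < Fintype.card ι :=
        Finset.card_lt_card (Finset.filter_ssubset.2 (by simpa using hq))
      rw [if_pos hb]
      omega
  · simp only [if_neg hb]
    have hq : Finset.univ.filter q = ∅ := Finset.filter_eq_empty_iff.2 fun i _ hi => hb (hqb i hi)
    simp [hq, ht0]

theorem sum_natCard_sub_mul_natCard_le_natCard {α ι : Type*} [Finite α] [Fintype ι]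
    {B T : α → Prop} {Q : ι → α → Prop} (hQB : ∀ i x, Q i x → B x)
    (hT : ∀ x, B x → (∀ i, Q i x) → T x) :
    ∑ i, (Nat.card {x // Q i x} : ℤ) - (Fintype.card ι - 1) * Nat.card {x // B x} ≤
      Nat.card {x // T x} := by
  classical
  have := Fintype.ofFinite α
  simp only [Nat.card_eq_fintype_card, Fintype.card_subtype, Finset.natCast_card_filter]
  rw [Finset.sum_comm, Finset.mul_sum, ← Finset.sum_sub_distrib]
  exact Finset.sum_le_sum fun x _ => sum_ite_sub_mul_ite_le_ite (hQB · x) (hT x)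

theorem sieve_inequality_general (q m : ℕ) (hm : 2 ≤ m)
    (F K : Type*) [Field F] [Fintype F] [Field K] [Algebra F K]
    (hK : Module.finrank F K = m)
    (a b c : K)
    (d : ℕ)
    (n : ℕ) (P : Fin n → ℕ)
    (hPall : ∀ p' : ℕ, p'.Prime → p' ∣ q ^ m - 1 → ¬ p' ∣ d → ∃ i, P i = p')
    (g : Polynomial F)
    (k : ℕ) (G : Fin k → Polynomial F)
    (hGall : ∀ h : Polynomial F, h.Monic → Irreducible h → h ∣ (X : Polynomial F) ^ m - 1 →
      ¬ h ∣ g → ∃ i, G i = h) :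
    (NCount F a b c (q ^ m - 1) (q ^ m - 1) ((X : Polynomial F) ^ m - 1) : ℤ) ≥
      (∑ i, (NCount F a b c (P i * d) d g : ℤ)) +
      (∑ i, (NCount F a b c d (P i * d) g : ℤ)) +
      (∑ i, (NCount F a b c d d (G i * g) : ℤ)) -
      ((2 * n + k : ℤ) - 1) * (NCount F a b c d d g : ℤ) := by
  have : Module.Finite F K := Module.finite_of_finrank_pos (by omega)
  have : Finite K := Module.finite_of_finite F
  let free (e₁ e₂ : ℕ) (h : F[X]) (α : K) : Prop :=
    IsEFree e₁ α ∧ IsGFree F h α ∧ IsEFree e₂ (a * α ^ 2 + b * α + c)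
  let refined : Fin n ⊕ Fin n ⊕ Fin k → K → Prop :=
    Sum.elim (fun i => free (P i * d) d g)
      (Sum.elim (fun i => free d (P i * d) g) (fun i => free d d (G i * g)))
  have refined_base : ∀ i α, refined i α → free d d g α := by
    rintro (i | i | i) α ⟨h₁, h₂, h₃⟩
    · exact ⟨h₁.mono (dvd_mul_left d _), h₂, h₃⟩
    · exact ⟨h₁, h₂, h₃.mono (dvd_mul_left d _)⟩
    · exact ⟨h₁, h₂.mono (dvd_mul_left g _), h₃⟩
  have all_refined : ∀ α, free d d g α → (∀ i, refined i α) →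
      free (q ^ m - 1) (q ^ m - 1) (X ^ m - 1) α := by
    rintro α ⟨h₁, h₂, h₃⟩ hrefined
    simp only [refined, Sum.forall, Sum.elim_inl, Sum.elim_inr] at hrefined
    obtain ⟨hP, hP', hG⟩ := hrefined
    exact ⟨h₁.of_forall_mul P hPall fun i => (hP i).1,
      h₂.of_forall_mul G hGall fun i => (hG i).2.1,
      h₃.of_forall_mul P hPall fun i => (hP' i).2.2⟩
  have sieve := sum_natCard_sub_mul_natCard_le_natCard refined_base all_refined
  simp only [refined, Fintype.sum_sum_type, Sum.elim_inl, Sum.elim_inr, Fintype.card_sum,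
    Fintype.card_fin] at sieve
  unfold NCount
  push_cast at sieve
  linarith

/-- **Sieve inequality.** If `p₁, …, pₙ` are the distinct primes dividing `q^m - 1` but not
`d`, and `g₁, …, g_k` the distinct monic irreducible polynomials dividing `x^m - 1` but not
`g`, then `N ≥ Σᵢ N(pᵢ d, d, g) + Σᵢ N(d, pᵢ d, g) + Σᵢ N(d, d, gᵢ g) − (2n + k − 1) N(d, d, g)`,
where `N = N(q^m − 1, q^m − 1, x^m − 1)`. -/
theorem sieve_inequality (p r q m : ℕ) (hp : p.Prime) (hodd : Odd p) (hr : 0 < r)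
    (hq : q = p ^ r) (hm : 2 ≤ m)
    (F K : Type*) [Field F] [Fintype F] [Field K] [Algebra F K]
    (hF : Fintype.card F = q) (hK : Module.finrank F K = m)
    (a b c : K) (ha : a ≠ 0) (hdisc : b ^ 2 - 4 * a * c ≠ 0)
    (d : ℕ) (hd : d ∣ q ^ m - 1)
    (n : ℕ) (P : Fin n → ℕ) (hPinj : Function.Injective P)
    (hP : ∀ i, (P i).Prime ∧ P i ∣ q ^ m - 1 ∧ ¬ P i ∣ d)
    (hPall : ∀ p' : ℕ, p'.Prime → p' ∣ q ^ m - 1 → ¬ p' ∣ d → ∃ i, P i = p')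
    (g : Polynomial F) (hg : g.Monic) (hgdvd : g ∣ X ^ m - 1)
    (k : ℕ) (G : Fin k → Polynomial F) (hGinj : Function.Injective G)
    (hG : ∀ i, (G i).Monic ∧ Irreducible (G i) ∧ G i ∣ (X : Polynomial F) ^ m - 1 ∧ ¬ G i ∣ g)
    (hGall : ∀ h : Polynomial F, h.Monic → Irreducible h → h ∣ (X : Polynomial F) ^ m - 1 →
      ¬ h ∣ g → ∃ i, G i = h) :
    (NCount F a b c (q ^ m - 1) (q ^ m - 1) ((X : Polynomial F) ^ m - 1) : ℤ) ≥
      (∑ i, (NCount F a b c (P i * d) d g : ℤ)) +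
      (∑ i, (NCount F a b c d (P i * d) g : ℤ)) +
      (∑ i, (NCount F a b c d d (G i * g) : ℤ)) -
      ((2 * n + k : ℤ) - 1) * (NCount F a b c d d g : ℤ) :=
  sieve_inequality_general q m hm F K hK a b c d n P hPall g k G hGall
end

section
/- For every positive integer n, the inequality 2^{ω(n)} < 11.25 · n^{1/5} holds, where ω(n) denotes the number of distinct prime divisors of n. -/
private def smallP : Finset ℕ := {2, 3, 5, 7, 11, 13, 17, 19, 23, 29, 31}

private lemma smallP_card : smallP.card = 11 := by decide

private lemma smallP_prod : smallP.prod id = 200560490130 := by decide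

private lemma key (F : Finset ℕ) (hF : ∀ p ∈ F, p.Prime) :
    32 ^ F.card * 200560490130 ≤ 32 ^ 11 * F.prod id := by
  classical
  set S := F ∩ smallP with hS
  set L := F \ smallP with hLdef
  have hScard : S.card + L.card = F.card := Finset.card_inter_add_card_sdiff F smallP
  have hprod : S.prod id * L.prod id = F.prod id := Finset.prod_inter_mul_prod_diff F smallP id
  have hL : 32 ^ L.card ≤ L.prod id := by
    apply Finset.pow_card_le_prod
    intro p hp
    have hp1 : p ∈ F := (Finset.mem_sdiff.mp hp).1
    have hp2 : p ∉ smallP := (Finset.mem_sdiff.mp hp).2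
    have hpr := hF p hp1
    by_contra h
    push_neg at h
    have h32 : p < 32 := h
    clear h hp hp1
    interval_cases p <;> revert hpr hp2 <;> decide
  have hSsub : S ⊆ smallP := Finset.inter_subset_right
  have hSsmall : (smallP \ S).prod id ≤ 32 ^ (smallP \ S).card := by
    apply Finset.prod_le_pow_card
    intro p hp
    have : p ∈ smallP := (Finset.mem_sdiff.mp hp).1
    fin_cases this <;> norm_num
  have hcard : S.card + (smallP \ S).card = 11 := by
    have h := Finset.card_sdiff_add_card_eq_card hSsub
    have h2 : smallP.card = 11 := smallP_card
    omega
  have hP : S.prod id * (smallP \ S).prod id = 200560490130 := by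
    rw [mul_comm, Finset.prod_sdiff hSsub, smallP_prod]
  calc 32 ^ F.card * 200560490130
      = (32 ^ S.card * S.prod id) * ((smallP \ S).prod id * 32 ^ L.card) := by
        rw [← hScard, ← hP]; ring
    _ ≤ (32 ^ S.card * S.prod id) * (32 ^ (smallP \ S).card * L.prod id) := by
        gcongr
    _ = 32 ^ (S.card + (smallP \ S).card) * (S.prod id * L.prod id) := by
        rw [pow_add]; ring
    _ = 32 ^ 11 * F.prod id := by rw [hcard, hprod]

/-- For every positive integer `n`, `2^{ω(n)} < 11.25 · n^{1/5}`, where `ω(n)` is the number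
of distinct prime divisors of `n`. -/
theorem two_pow_omega_lt (n : ℕ) (hn : 0 < n) :
    (2 : ℝ) ^ n.primeFactors.card < 11.25 * (n : ℝ) ^ ((1 : ℝ) / 5) := by
  set k := n.primeFactors.card with hk
  have hkey := key n.primeFactors (fun p hp => Nat.prime_of_mem_primeFactors hp)
  have hrad : n.primeFactors.prod id ≤ n :=
    Nat.le_of_dvd hn (Nat.prod_primeFactors_dvd n)
  have h1 : 32 ^ k * 200560490130 ≤ 32 ^ 11 * n := by
    calc 32 ^ k * 200560490130 ≤ 32 ^ 11 * n.primeFactors.prod id := hkey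
      _ ≤ 32 ^ 11 * n := by gcongr
  -- cast to ℝ
  have h1R : (32 : ℝ) ^ k * 200560490130 ≤ 32 ^ 11 * n := by exact_mod_cast h1
  have hn1 : (1 : ℝ) ≤ n := by exact_mod_cast hn
  have h5 : ((2 : ℝ) ^ k) ^ 5 < (11.25 : ℝ) ^ 5 * n := by
    have h32 : ((2 : ℝ) ^ k) ^ 5 = 32 ^ k := by
      rw [← pow_mul, mul_comm, pow_mul]; norm_num
    rw [h32]
    nlinarith [h1R, hn1]
  have hlt := Real.rpow_lt_rpow (by positivity) h5 (by norm_num : (0:ℝ) < 1/5)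
  have e1 : (((2 : ℝ) ^ k) ^ 5) ^ ((1:ℝ)/5) = (2 : ℝ) ^ k := by
    rw [show ((1:ℝ)/5) = ((5:ℕ):ℝ)⁻¹ by norm_num]
    exact Real.pow_rpow_inv_natCast (by positivity) (by norm_num)
  have e2 : ((11.25 : ℝ) ^ 5 * n) ^ ((1:ℝ)/5) = 11.25 * (n : ℝ) ^ ((1:ℝ)/5) := by
    rw [Real.mul_rpow (by positivity) (by positivity)]
    congr 1
    rw [show ((1:ℝ)/5) = ((5:ℕ):ℝ)⁻¹ by norm_num]
    exact Real.pow_rpow_inv_natCast (by norm_num) (by norm_num)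
  rwa [e1, e2] at hlt
end

section
/- Let q = 3^r, and let m be a positive integer ≥ 2 written as m = m'·3^j with gcd(m', 3) = 1, and suppose m' does not divide q − 1. Let u be the multiplicative order of q modulo m', and let M be the number of distinct monic irreducible factors of x^m − 1 over F_q of degree less than u. Define ϑ(q,m) := M/m. Then: ϑ(q,m) ≤ 1/2 if m = 2·gcd(q − 1, m'); ϑ(q,m) ≤ 3/8 if m = 4·gcd(q − 1, m'); and ϑ(q,m) ≤ 1/3 otherwise. -/
/-!
Because `q` is a power of the characteristic, `X ^ m - 1 = (X ^ m' - 1) ^ 3 ^ j`, so only the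
factors of `X ^ m' - 1` matter. An irreducible factor of degree `d` divides a cyclotomic
polynomial `Φ_e` with `e ∣ m'`, and `d` is the order of `q` modulo `e`. Hence `d ∣ u`, and all
factors whose degree divides `s` divide `X ^ A_s - 1`, `A_s = gcd(m', q ^ s - 1)`; writing `S_d`
for the number of factors of degree `d`, this gives `∑_{d ∣ s} d S_d ≤ A_s`. On the other hand
the powers of `q ^ d` are `≡ 1 (mod A_d)`, so `u / d ≤ m' / A_d`. Together, `S_d ≤ m' / u` for
each proper divisor `d` of `u`, which already gives `M ≤ m' / 3` unless `u ∈ {2, 4, 6, 8, 12}`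
(otherwise `u` has at most `u / 3` proper divisors). In those cases, and when
`m' / gcd(q - 1, m') ∈ {2, 4}`, the bound follows from the inequalities for small `s`, using
`3 ∤ m'`. For `j ≥ 1` the trivial bound `M ≤ m' ≤ m / 3` suffices.
-/

open Finset Polynomial UniqueFactorizationMonoid

namespace Nat

lemma add_one_mul_le_of_dvd_of_mul_lt {a n k : ℕ} (ha : a ∣ n) (h : k * a < n) :
    (k + 1) * a ≤ n := by
  obtain ⟨c, rfl⟩ := ha
  have hkc : k < c := Nat.lt_of_mul_lt_mul_right (a := a) (by linarith [mul_comm a c])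
  nlinarith

lemma four_mul_le_of_dvd_of_two_mul_lt {a n : ℕ} (ha : a ∣ n) (h3 : ¬ 3 ∣ n) (h : 2 * a < n) :
    4 * a ≤ n := by
  have h3a : 3 * a ≤ n := add_one_mul_le_of_dvd_of_mul_lt ha h
  have h3a' : 3 * a ≠ n := fun h' => h3 ⟨a, h'.symm⟩
  exact add_one_mul_le_of_dvd_of_mul_lt ha (by omega)

lemma three_mul_card_properDivisors_le {u : ℕ} (hu : u ∉ ({2, 4, 6, 8, 12} : Finset ℕ)) :
    3 * #u.properDivisors ≤ u := by
  rcases le_or_gt u 24 with hu24 | hu24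
  · interval_cases u <;> simp_all [Nat.properDivisors_ofNat]
  -- a proper divisor `d = u / k` has `k ≥ 6` or `k ∈ [2, 5]`
  have hsub : u.properDivisors ⊆ Icc 1 (u / 6) ∪ (Icc 2 5).image (u / ·) := by
    intro d hd
    obtain ⟨⟨k, rfl⟩, hdk⟩ := Nat.mem_properDivisors.mp hd
    have hd0 : 0 < d := Nat.pos_of_mem_properDivisors hd
    have hk : 2 ≤ k := by
      by_contra! hk
      interval_cases k <;> simp_all
    rcases le_or_gt 6 k with hk6 | hk6
    · refine mem_union_left _ (mem_Icc.mpr ⟨hd0, ?_⟩)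
      rw [Nat.le_div_iff_mul_le (by norm_num)]
      nlinarith
    · refine mem_union_right _ (mem_image.mpr ⟨k, mem_Icc.mpr ⟨hk, by omega⟩, ?_⟩)
      exact Nat.mul_div_cancel d (by omega)
  have hcard := (card_le_card hsub).trans (card_union_le _ _)
  have himage : #((Icc 2 5).image (u / ·)) ≤ 4 := Finset.card_image_le
  rw [Nat.card_Icc] at hcard
  omega

end Nat

section DegreeProfile

variable {n u : ℕ} {A S : ℕ → ℕ}

/- Abstract shape of the counting problem: `S d` stands for the number of distinct irreducible
factors of degree `d` of `X ^ n - 1` over `𝔽_q`, `A s` for `gcd(n, q ^ s - 1)`, and `u` for the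
order of `q` modulo `n`. -/

lemma mul_le_of_mem_properDivisors (hS : ∀ s, 0 < s → ∑ d ∈ s.divisors, d * S d ≤ A s)
    (hA : ∀ d, d ∣ u → A d * u ≤ n * d) {d : ℕ} (hd : d ∈ u.properDivisors) : S d * u ≤ n := by
  have hd0 : 0 < d := Nat.pos_of_mem_properDivisors hd
  have hdS : d * S d ≤ A d :=
    (single_le_sum (fun i _ => Nat.zero_le (i * S i)) (Nat.mem_divisors_self d hd0.ne')).trans
      (hS d hd0)
  have := hA d (Nat.mem_properDivisors.mp hd).1
  have : d * (S d * u) ≤ d * n := by nlinarith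
  exact Nat.le_of_mul_le_mul_left this hd0

lemma three_mul_sum_properDivisors_le_of_notMem
    (hS : ∀ s, 0 < s → ∑ d ∈ s.divisors, d * S d ≤ A s) (hA : ∀ d, d ∣ u → A d * u ≤ n * d)
    (hu : u ∉ ({2, 4, 6, 8, 12} : Finset ℕ)) :
    3 * ∑ d ∈ u.properDivisors, S d ≤ n := by
  have hsum : (∑ d ∈ u.properDivisors, S d) * u ≤ #u.properDivisors * n := by
    rw [sum_mul]
    simpa using sum_le_sum fun d hd => mul_le_of_mem_properDivisors hS hA hd
  have hcard := Nat.three_mul_card_properDivisors_le hu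
  rcases Nat.eq_zero_or_pos u with rfl | hu0
  · simp
  · nlinarith

lemma three_mul_sum_properDivisors_le
    (hS : ∀ s, 0 < s → ∑ d ∈ s.divisors, d * S d ≤ A s) (hA : ∀ d, d ∣ u → A d * u ≤ n * d)
    (h3 : ¬ 3 ∣ n) (hA2 : A 2 ∣ n) (hA12 : A 1 ∣ A 2) (h5 : 5 * A 1 ≤ n)
    (h8 : 2 * A 1 ∣ n → 8 * A 1 ≤ n) :
    3 * ∑ d ∈ u.properDivisors, S d ≤ n := by
  by_cases hu : u ∈ ({2, 4, 6, 8, 12} : Finset ℕ)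
  swap
  · exact three_mul_sum_properDivisors_le_of_notMem hS hA hu
  have hA2_lt : 2 * A 2 < n → 4 * A 2 ≤ n := Nat.four_mul_le_of_dvd_of_two_mul_lt hA2 h3
  -- if `A 2 = n / 2` then `n / A 1` is even, hence at least `8`
  have hA2_eq : 2 * A 2 = n → 8 * A 1 ≤ n := fun h => h8 (h ▸ mul_dvd_mul_left 2 hA12)
  have hS1 := hS 1 one_pos
  have hS2 := hS 2 two_pos
  have hS3 := hS 3 three_pos
  have hS4 := hS 4 four_pos
  have hS6 := hS 6 (by norm_num)
  have hA2u := hA 2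
  have hA3u := hA 3
  have hA4u := hA 4
  have hA6u := hA 6
  simp only [mem_insert, mem_singleton] at hu
  rcases hu with rfl | rfl | rfl | rfl | rfl <;>
  · simp [Nat.divisors_ofNat, Nat.properDivisors_ofNat] at hS1 hS2 hS3 hS4 hS6 hA2u hA3u hA4u hA6u ⊢
    omega

lemma two_mul_sum_properDivisors_le
    (hS : ∀ s, 0 < s → ∑ d ∈ s.divisors, d * S d ≤ A s) (hA : ∀ d, d ∣ u → A d * u ≤ n * d)
    (hn : 0 < n) (h : n = 2 * A 1) :
    2 * ∑ d ∈ u.properDivisors, S d ≤ n := by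
  have hS1 := hS 1 one_pos
  have hu : u ≤ 2 := by nlinarith [hA 1 (one_dvd u)]
  interval_cases u <;> simp [Nat.properDivisors_ofNat] at hS1 ⊢
  omega

lemma eight_mul_sum_properDivisors_le
    (hS : ∀ s, 0 < s → ∑ d ∈ s.divisors, d * S d ≤ A s) (hA : ∀ d, d ∣ u → A d * u ≤ n * d)
    (hn : 0 < n) (h : n = 4 * A 1) :
    8 * ∑ d ∈ u.properDivisors, S d ≤ 3 * n := by
  have hS1 := hS 1 one_pos
  have hS2 := hS 2 two_pos
  have hA2u := hA 2
  have hu : u ≤ 4 := by nlinarith [hA 1 (one_dvd u)]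
  interval_cases u <;> simp [Nat.divisors_ofNat, Nat.properDivisors_ofNat] at hS1 hS2 hA2u ⊢ <;>
    omega

theorem sum_properDivisors_bounds
    (hS : ∀ s, 0 < s → ∑ d ∈ s.divisors, d * S d ≤ A s) (hA : ∀ d, d ∣ u → A d * u ≤ n * d)
    (hn : 0 < n) (h3 : ¬ 3 ∣ n) (hAn : ∀ s, A s ∣ n) (hA1 : ∀ s, A 1 ∣ A s) (hn1 : n ≠ A 1) :
    (n = 2 * A 1 → 2 * ∑ d ∈ u.properDivisors, S d ≤ n) ∧
    (n = 4 * A 1 → 8 * ∑ d ∈ u.properDivisors, S d ≤ 3 * n) ∧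
    (n ≠ 2 * A 1 → n ≠ 4 * A 1 → 3 * ∑ d ∈ u.properDivisors, S d ≤ n) := by
  refine ⟨two_mul_sum_properDivisors_le hS hA hn, eight_mul_sum_properDivisors_le hS hA hn,
    fun hn2 hn4 => ?_⟩
  have hg : A 1 < n := (Nat.le_of_dvd hn (hAn 1)).lt_of_ne' hn1
  have h2g : 2 * A 1 < n :=
    (Nat.add_one_mul_le_of_dvd_of_mul_lt (hAn 1) (by omega : 1 * A 1 < n)).lt_of_ne' hn2
  have h4g : 4 * A 1 < n := (Nat.four_mul_le_of_dvd_of_two_mul_lt (hAn 1) h3 h2g).lt_of_ne' hn4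
  refine three_mul_sum_properDivisors_le hS hA h3 (hAn 2) (hA1 2)
    (Nat.add_one_mul_le_of_dvd_of_mul_lt (hAn 1) h4g) fun h2 => ?_
  have := Nat.four_mul_le_of_dvd_of_two_mul_lt h2 h3 (by omega)
  omega

end DegreeProfile

namespace Finset

lemma sum_divisors_mul_card_filter_eq {α : Type*} (T : Finset α) (g : α → ℕ) {s : ℕ}
    (hs : s ≠ 0) : ∑ d ∈ s.divisors, d * #{x ∈ T | g x = d} = ∑ x ∈ T with g x ∣ s, g x := by
  have h := sum_fiberwise_of_maps_to' (s := {x ∈ T | g x ∣ s}) (t := s.divisors) (g := g)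
    (fun x hx => Nat.mem_divisors.mpr ⟨(mem_filter.mp hx).2, hs⟩) fun d => d
  rw [← h]
  refine sum_congr rfl fun d hd => ?_
  rw [filter_filter, sum_const, smul_eq_mul, mul_comm]
  congr 2
  exact filter_congr fun x _ => ⟨fun h => ⟨h ▸ Nat.dvd_of_mem_divisors hd, h⟩, And.right⟩

lemma card_filter_lt_eq_sum_properDivisors {α : Type*} (T : Finset α) (g : α → ℕ) {u : ℕ}
    (hg : ∀ x ∈ T, g x ∣ u) : #{x ∈ T | g x < u} = ∑ d ∈ u.properDivisors, #{x ∈ T | g x = d} := by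
  rw [card_eq_sum_card_fiberwise (t := u.properDivisors)
    fun x hx => Nat.mem_properDivisors.mpr ⟨hg x (mem_filter.mp hx).1, (mem_filter.mp hx).2⟩]
  refine sum_congr rfl fun d hd => ?_
  rw [filter_filter]
  exact congrArg card <| filter_congr fun x _ =>
    ⟨And.right, fun h => ⟨h ▸ (Nat.mem_properDivisors.mp hd).2, h⟩⟩

end Finset

lemma ZMod.orderOf_natCast_mul_gcd_sub_one_le {n x : ℕ} [NeZero n] (hx : 0 < x) :
    orderOf (x : ZMod n) * n.gcd (x - 1) ≤ n := by
  set a := n.gcd (x - 1)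
  have ha0 : 0 < a := Nat.gcd_pos_of_pos_left _ (NeZero.pos n)
  -- the powers of `x` are all `1` modulo `a`, and there are only `n / a` such residues
  have hmem : ∀ k, (x : ZMod n) ^ k - 1 ∈ AddSubgroup.zmultiples (a : ZMod n) := by
    intro k
    obtain ⟨t, ht⟩ := (Nat.gcd_dvd_right n (x - 1)).trans (Nat.sub_one_dvd_pow_sub_one x k)
    have hcast : ((x ^ k - 1 : ℕ) : ZMod n) = (x : ZMod n) ^ k - 1 := by
      rw [Nat.cast_sub (Nat.one_le_pow _ _ hx)]
      push_cast
      rfl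
    rw [← hcast, ht, Nat.cast_mul, mul_comm, ← nsmul_eq_mul]
    exact AddSubgroup.nsmul_mem _ (AddSubgroup.mem_zmultiples _) t
  have hle : orderOf (x : ZMod n) ≤ (AddSubgroup.zmultiples (a : ZMod n) : Set (ZMod n)).ncard :=
    Set.le_ncard_of_inj_on_range (fun k => (x : ZMod n) ^ k - 1) (fun k _ => hmem k)
      fun i hi j hj hij => pow_injOn_Iio_orderOf hi hj (sub_left_inj.mp hij)
  rw [← Nat.card_coe_set_eq, SetLike.coe_sort_coe, Nat.card_zmultiples,
    ZMod.addOrderOf_coe _ (NeZero.ne n), Nat.gcd_eq_right (Nat.gcd_dvd_left _ _)] at hle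
  exact (Nat.le_div_iff_mul_le ha0).mp hle

lemma ZMod.gcd_pow_sub_one_mul_orderOf_le {n q d : ℕ} [NeZero n] (hq : 0 < q)
    (hd : d ∣ orderOf (q : ZMod n)) : n.gcd (q ^ d - 1) * orderOf (q : ZMod n) ≤ n * d := by
  rcases Nat.eq_zero_or_pos d with rfl | hd0
  · simp [zero_dvd_iff.mp hd]
  have h := ZMod.orderOf_natCast_mul_gcd_sub_one_le (n := n) (pow_pos hq d)
  rw [Nat.cast_pow, orderOf_pow_of_dvd hd0.ne' hd] at h
  calc n.gcd (q ^ d - 1) * orderOf (q : ZMod n)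
      = orderOf (q : ZMod n) / d * n.gcd (q ^ d - 1) * d := by
        rw [mul_comm _ (n.gcd _), mul_assoc, Nat.div_mul_cancel hd]
    _ ≤ n * d := Nat.mul_le_mul_right d h

namespace Polynomial

lemma X_pow_sub_one_dvd_X_pow_sub_one {R : Type*} [CommRing R] {a b : ℕ} (h : a ∣ b) :
    (X ^ a - 1 : R[X]) ∣ X ^ b - 1 := by
  obtain ⟨c, rfl⟩ := h
  simpa [pow_mul] using sub_dvd_pow_sub_pow (X ^ a : R[X]) 1 c

variable {K : Type*} [Field K]

lemma sum_natDegree_toFinset_normalizedFactors_le [DecidableEq K] (p : K[X]) :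
    ∑ f ∈ (normalizedFactors p).toFinset, f.natDegree ≤ p.natDegree := by
  rcases eq_or_ne p 0 with rfl | hp
  · simp
  calc ∑ f ∈ (normalizedFactors p).toFinset, f.natDegree
      ≤ ∑ f ∈ (normalizedFactors p).toFinset, (normalizedFactors p).count f • f.natDegree :=
        sum_le_sum fun f hf => Nat.le_mul_of_pos_left _ (Multiset.count_pos.mpr
          (Multiset.mem_toFinset.mp hf))
    _ = ((normalizedFactors p).map natDegree).sum := (sum_multiset_map_count _ _).symm
    _ = (normalizedFactors p).prod.natDegree :=
        (natDegree_multiset_prod _ (zero_notMem_normalizedFactors p)).symm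
    _ = p.natDegree :=
        natDegree_eq_of_degree_eq (degree_eq_degree_of_associated (prod_normalizedFactors hp))

variable [Fintype K]

theorem exists_dvd_X_pow_sub_one_natDegree_eq_orderOf {q n : ℕ} (hK : Fintype.card K = q)
    (hn : 0 < n) (hq : q.Coprime n) {f : K[X]} (hf : Irreducible f) (hfn : f ∣ X ^ n - 1) :
    ∃ e, e ∣ n ∧ f ∣ X ^ e - 1 ∧ f.natDegree = orderOf (q : ZMod e) := by
  obtain ⟨k, hp, hKp⟩ := FiniteField.card K (ringChar K)
  have := Fact.mk hp
  rw [← prod_cyclotomic_eq_X_pow_sub_one hn] at hfn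
  obtain ⟨e, he, hfe⟩ := (hf.prime.dvd_finsetProd_iff _).mp hfn
  have hen := Nat.dvd_of_mem_divisors he
  have hpe : (ringChar K).Coprime e :=
    ((hKp ▸ hK ▸ hq).coprime_dvd_left (dvd_pow_self _ k.ne_zero)).coprime_dvd_right hen
  refine ⟨e, hen, hfe.trans (cyclotomic.dvd_X_pow_sub_one e K), ?_⟩
  rw [natDegree_of_dvd_cyclotomic_of_irreducible hKp hpe hfe hf, ← orderOf_units,
    ZMod.coe_unitOfCoprime, ← hKp, hK]

theorem natDegree_dvd_orderOf_of_dvd_X_pow_sub_one {q n : ℕ} (hK : Fintype.card K = q)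
    (hn : 0 < n) (hq : q.Coprime n) {f : K[X]} (hf : Irreducible f) (hfn : f ∣ X ^ n - 1) :
    f.natDegree ∣ orderOf (q : ZMod n) := by
  obtain ⟨e, hen, -, hdeg⟩ := exists_dvd_X_pow_sub_one_natDegree_eq_orderOf hK hn hq hf hfn
  rw [hdeg, ← map_natCast (ZMod.castHom hen (ZMod e))]
  exact orderOf_map_dvd (ZMod.castHom hen (ZMod e)).toMonoidHom _

theorem dvd_X_pow_gcd_sub_one_of_natDegree_dvd {q n : ℕ} (hK : Fintype.card K = q)
    (hn : 0 < n) (hq : q.Coprime n) {f : K[X]} (hf : Irreducible f) (hfn : f ∣ X ^ n - 1)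
    {s : ℕ} (hs : f.natDegree ∣ s) : f ∣ X ^ n.gcd (q ^ s - 1) - 1 := by
  obtain ⟨e, hen, hfe, hdeg⟩ := exists_dvd_X_pow_sub_one_natDegree_eq_orderOf hK hn hq hf hfn
  have hpow : (q : ZMod e) ^ s = 1 := orderOf_dvd_iff_pow_eq_one.mp (hdeg ▸ hs)
  have hes : e ∣ q ^ s - 1 := by
    rw [← ZMod.natCast_eq_zero_iff, Nat.cast_sub (Nat.one_le_pow _ _ (hK ▸ Fintype.card_pos))]
    simp [hpow]
  exact hfe.trans (X_pow_sub_one_dvd_X_pow_sub_one (Nat.dvd_gcd hen hes))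

theorem sum_natDegree_filter_dvd_le [DecidableEq K] {q n : ℕ} (hK : Fintype.card K = q)
    (hn : 0 < n) (hq : q.Coprime n) (s : ℕ) :
    ∑ f ∈ (normalizedFactors (X ^ n - 1 : K[X])).toFinset with f.natDegree ∣ s, f.natDegree ≤
      n.gcd (q ^ s - 1) := by
  set a := n.gcd (q ^ s - 1)
  have hX : (X ^ a - 1 : K[X]) ≠ 0 := X_pow_sub_C_ne_zero (Nat.gcd_pos_of_pos_left _ hn) 1
  have hXn : (X ^ n - 1 : K[X]) ≠ 0 := X_pow_sub_C_ne_zero hn 1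
  calc _ ≤ ∑ f ∈ (normalizedFactors (X ^ a - 1 : K[X])).toFinset, f.natDegree := by
        refine sum_le_sum_of_subset fun f hf => ?_
        obtain ⟨hf, hfs⟩ := mem_filter.mp hf
        rw [Multiset.mem_toFinset, Polynomial.mem_normalizedFactors_iff hXn] at hf
        rw [Multiset.mem_toFinset, Polynomial.mem_normalizedFactors_iff hX]
        exact ⟨hf.1, hf.2.1, dvd_X_pow_gcd_sub_one_of_natDegree_dvd hK hn hq hf.1 hf.2.2 hfs⟩
    _ ≤ (X ^ a - 1 : K[X]).natDegree := sum_natDegree_toFinset_normalizedFactors_le _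
    _ = a := by rw [← C_1, natDegree_X_pow_sub_C]

end Polynomial

noncomputable def numSmallFactors (K : Type*) [Field K] [DecidableEq K] (n u : ℕ) : ℕ :=
  #{f ∈ (normalizedFactors (X ^ n - 1 : K[X])).toFinset | f.natDegree < u}

section numSmallFactors

variable {K : Type*} [Field K] [DecidableEq K]

lemma numSmallFactors_mul_pow {p : ℕ} [Fact p.Prime] [CharP K p] (n j u : ℕ) :
    numSmallFactors K (n * p ^ j) u = numSmallFactors K n u := by
  have h : (X ^ (n * p ^ j) - 1 : K[X]) = (X ^ n - 1) ^ p ^ j := by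
    rw [sub_pow_char_pow, one_pow, pow_mul]
  rw [numSmallFactors, numSmallFactors, h, normalizedFactors_pow,
    Multiset.toFinset_nsmul _ _ (pow_ne_zero _ (Fact.out : p.Prime).ne_zero)]

theorem numSmallFactors_bounds [Fintype K] {q n : ℕ} (hK : Fintype.card K = q) (hn : 0 < n)
    (hq : q.Coprime n) (h3 : ¬ 3 ∣ n) (hnq : ¬ n ∣ q - 1) :
    (n = 2 * n.gcd (q - 1) → 2 * numSmallFactors K n (orderOf (q : ZMod n)) ≤ n) ∧
    (n = 4 * n.gcd (q - 1) → 8 * numSmallFactors K n (orderOf (q : ZMod n)) ≤ 3 * n) ∧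
    (n ≠ 2 * n.gcd (q - 1) → n ≠ 4 * n.gcd (q - 1) →
      3 * numSmallFactors K n (orderOf (q : ZMod n)) ≤ n) := by
  have : NeZero n := ⟨hn.ne'⟩
  set T := (normalizedFactors (X ^ n - 1 : K[X])).toFinset
  have hX : (X ^ n - 1 : K[X]) ≠ 0 := X_pow_sub_C_ne_zero hn 1
  have hT : ∀ f ∈ T, Irreducible f ∧ f ∣ X ^ n - 1 := fun f hf => by
    rw [Multiset.mem_toFinset, Polynomial.mem_normalizedFactors_iff hX] at hf
    exact ⟨hf.1, hf.2.2⟩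
  have hsum : numSmallFactors K n (orderOf (q : ZMod n)) =
      ∑ d ∈ (orderOf (q : ZMod n)).properDivisors, #{f ∈ T | f.natDegree = d} :=
    card_filter_lt_eq_sum_properDivisors T natDegree fun f hf =>
      natDegree_dvd_orderOf_of_dvd_X_pow_sub_one hK hn hq (hT f hf).1 (hT f hf).2
  rw [hsum]
  simpa only [pow_one] using sum_properDivisors_bounds (A := fun s => n.gcd (q ^ s - 1))
    (fun s hs => by
      rw [sum_divisors_mul_card_filter_eq T natDegree hs.ne']
      exact sum_natDegree_filter_dvd_le hK hn hq s)
    (fun d hd => ZMod.gcd_pow_sub_one_mul_orderOf_le (hK ▸ Fintype.card_pos) hd)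
    hn h3 (fun s => Nat.gcd_dvd_left _ _)
    (fun s => Nat.dvd_gcd (Nat.gcd_dvd_left _ _)
      ((Nat.gcd_dvd_right _ _).trans (by simpa using Nat.sub_one_dvd_pow_sub_one q s)))
    (fun h => hnq (by rw [pow_one] at h; exact h ▸ Nat.gcd_dvd_right _ _))

end numSmallFactors

theorem theta_ratio_bounds_general (r : ℕ) (q : ℕ) (hq : q = 3 ^ r)
    (m m' j : ℕ) (hm : 2 ≤ m) (hmm : m = m' * 3 ^ j) (hm3 : Nat.gcd m' 3 = 1)
    (hndvd : ¬ m' ∣ q - 1)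
    (F : Type*) [Field F] [Fintype F] [DecidableEq F] (hF : Fintype.card F = q)
    (u : ℕ) (hu : u = orderOf (q : ZMod m'))
    (M : ℕ)
    (hM : M = ((UniqueFactorizationMonoid.normalizedFactors
        ((X : Polynomial F) ^ m - 1)).toFinset.filter fun f => f.natDegree < u).card) :
    (m = 2 * Nat.gcd (q - 1) m' → (M : ℚ) / m ≤ 1 / 2) ∧
    (m = 4 * Nat.gcd (q - 1) m' → (M : ℚ) / m ≤ 3 / 8) ∧
    (m ≠ 2 * Nat.gcd (q - 1) m' → m ≠ 4 * Nat.gcd (q - 1) m' → (M : ℚ) / m ≤ 1 / 3) := by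
  have hm' : 0 < m' := Nat.pos_of_ne_zero fun h => by simp [h] at hmm; omega
  have h3m' : Nat.Coprime 3 m' := Nat.Coprime.symm hm3
  have h3 : ¬ 3 ∣ m' := (Nat.Prime.coprime_iff_not_dvd Nat.prime_three).mp h3m'
  have := Fact.mk Nat.prime_three
  have := charP_of_card_eq_prime_pow (hF.trans hq)
  have hMm' : M = numSmallFactors F m' u := by
    rw [hM, hmm, ← numSmallFactors_mul_pow (p := 3)]
    rfl
  obtain ⟨hb2, hb4, hb⟩ := numSmallFactors_bounds hF hm' (hq ▸ h3m'.pow_left r) h3 hndvd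
  rw [← hu, ← hMm', Nat.gcd_comm] at hb2 hb4 hb
  have hnat : (m = 2 * (q - 1).gcd m' → 2 * M ≤ m) ∧ (m = 4 * (q - 1).gcd m' → 8 * M ≤ 3 * m) ∧
      (m ≠ 2 * (q - 1).gcd m' → m ≠ 4 * (q - 1).gcd m' → 3 * M ≤ m) := by
    rcases j with _ | j
    · rw [pow_zero, mul_one] at hmm
      subst hmm
      exact ⟨hb2, hb4, hb⟩
    · have : 3 * m' ≤ m := by rw [hmm, pow_succ]; nlinarith [Nat.one_le_pow j 3 three_pos]
      omega
  have hmQ : (0 : ℚ) < m := by exact_mod_cast (by omega : 0 < m)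
  refine ⟨fun h => ?_, fun h => ?_, fun h h' => ?_⟩ <;> rw [div_le_div_iff₀ hmQ (by norm_num)]
  · exact_mod_cast (by omega : M * 2 ≤ 1 * m)
  · exact_mod_cast (by omega : M * 8 ≤ 3 * m)
  · exact_mod_cast (by omega : M * 3 ≤ 1 * m)

/-- Bounds on the ratio `ϑ(q,m) = M/m`, where `M` is the number of distinct monic irreducible
factors of `x^m − 1` over `F_q` (`q = 3^r`) of degree less than the multiplicative order `u`
of `q` modulo `m'`. -/
theorem theta_ratio_bounds (r : ℕ) (hr : 0 < r) (q : ℕ) (hq : q = 3 ^ r)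
    (m m' j : ℕ) (hm : 2 ≤ m) (hmm : m = m' * 3 ^ j) (hm3 : Nat.gcd m' 3 = 1)
    (hndvd : ¬ m' ∣ q - 1)
    (F : Type*) [Field F] [Fintype F] [DecidableEq F] (hF : Fintype.card F = q)
    (u : ℕ) (hu : u = orderOf (q : ZMod m'))
    (M : ℕ)
    (hM : M = ((UniqueFactorizationMonoid.normalizedFactors
        ((X : Polynomial F) ^ m - 1)).toFinset.filter fun f => f.natDegree < u).card) :
    (m = 2 * Nat.gcd (q - 1) m' → (M : ℚ) / m ≤ 1 / 2) ∧
    (m = 4 * Nat.gcd (q - 1) m' → (M : ℚ) / m ≤ 3 / 8) ∧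
    (m ≠ 2 * Nat.gcd (q - 1) m' → m ≠ 4 * Nat.gcd (q - 1) m' → (M : ℚ) / m ≤ 1 / 3) :=
  theta_ratio_bounds_general r q hq m m' j hm hmm hm3 hndvd F hF u hu M hM
end

section
/- Let q = 3^r and let m ≥ 2 be an integer with m = m'·3^j, gcd(m', 3) = 1, such that m' does not divide q − 1, and let u > 1 be the multiplicative order of q modulo m'. Let g be the product of all distinct monic irreducible factors of x^{m'} − 1 over F_q of degree less than u, and let g_1, …, g_k be the remaining distinct monic irreducible factors of x^{m'} − 1 (those of degree u). Set Δ := 1 − Σ_{i=1}^{k} 1/q^{deg(g_i)} and Λ := (k − 1)/Δ + 2. Then Δ > 0 and Λ ≤ m'. -/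
/-!
The `u`-th power of `q` is `1` modulo `m'`, so `m' < q ^ u`. The distinct irreducible factors
`g₁, …, g_k` of `x^{m'} − 1` are pairwise coprime, so their product divides it and
`k u ≤ m'`, whence `2k ≤ m'` as `u ≥ 2`. Hence `Δ = 1 − k / q^u > 1/2`, and
`Λ ≤ 2(k − 1) + 2 = 2k ≤ m'` (for `k = 0`, `Λ = 1`).
-/

open Polynomial

theorem lt_pow_orderOf_natCast {n q : ℕ} (hq : 1 < q) (hu : 0 < orderOf (q : ZMod n)) :
    0 < n ∧ n < q ^ orderOf (q : ZMod n) := by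
  set u := orderOf (q : ZMod n)
  have hqu : 1 < q ^ u := Nat.one_lt_pow hu.ne' hq
  have hdvd : n ∣ q ^ u - 1 := by
    rw [← ZMod.natCast_eq_zero_iff, Nat.cast_sub hqu.le]
    simp [u, pow_orderOf_eq_one]
  have hpos : 0 < q ^ u - 1 := by omega
  exact ⟨Nat.pos_of_dvd_of_pos hdvd hpos, by have := Nat.le_of_dvd hpos hdvd; omega⟩

theorem Polynomial.pairwise_isCoprime_of_injective {K ι : Type*} [Field K] {G : ι → K[X]}
    (hinj : Function.Injective G) (hmonic : ∀ i, (G i).Monic) (hirr : ∀ i, Irreducible (G i)) :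
    Pairwise (Function.onFun IsCoprime G) := by
  intro i j hij
  refine (hirr i).coprime_iff_not_dvd.mpr fun hdvd => hij (hinj ?_)
  exact eq_of_monic_of_associated (hmonic i) (hmonic j)
    (associated_of_dvd_dvd hdvd ((hirr i).dvd_symm (hirr j) hdvd))

theorem Polynomial.sum_natDegree_le_of_forall_dvd {K ι : Type*} [Field K] [Fintype ι]
    {G : ι → K[X]} (hinj : Function.Injective G) (hmonic : ∀ i, (G i).Monic)
    (hirr : ∀ i, Irreducible (G i)) {p : K[X]} (hp : p ≠ 0) (hdvd : ∀ i, G i ∣ p) :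
    ∑ i, (G i).natDegree ≤ p.natDegree := by
  rw [← natDegree_prod _ _ fun i _ => (hirr i).ne_zero]
  exact natDegree_le_of_dvd
    (Fintype.prod_dvd_of_coprime (pairwise_isCoprime_of_injective hinj hmonic hirr) hdvd) hp

theorem one_sub_div_pos_and_sub_one_div_add_two_le {k : ℕ} {M x : ℝ} (hM : 1 ≤ M)
    (hkM : 2 * k ≤ M) (hMx : M < x) :
    0 < 1 - k / x ∧ (k - 1) / (1 - k / x) + 2 ≤ M := by
  have hx : 0 < x := by linarith
  have hhalf : 1 / 2 < 1 - k / x := by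
    rw [lt_sub_comm, div_lt_iff₀ hx]
    linarith
  refine ⟨by linarith, ?_⟩
  rcases Nat.eq_zero_or_pos k with rfl | hk
  · simp only [CharP.cast_eq_zero, zero_sub, zero_div, sub_zero, div_one, neg_add_le_iff_le_add]
    linarith
  · have hk1 : (1 : ℝ) ≤ k := by exact_mod_cast hk
    have : (k - 1) / (1 - k / x) ≤ 2 * (k - 1) := by
      rw [div_le_iff₀ (by linarith)]
      nlinarith
    linarith

theorem lambda_le_m'_general (q : ℕ)
    (m' : ℕ)
    (F : Type*) [Field F] [Fintype F] (hF : Fintype.card F = q)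
    (u : ℕ) (hu : u = orderOf (q : ZMod m')) (hu1 : 1 < u)
    (k : ℕ) (G : Fin k → Polynomial F) (hGinj : Function.Injective G)
    (hG : ∀ i, (G i).Monic ∧ Irreducible (G i) ∧ G i ∣ (X : Polynomial F) ^ m' - 1 ∧
      (G i).natDegree = u) :
    (0 : ℝ) < 1 - ∑ i, (1 : ℝ) / (q : ℝ) ^ (G i).natDegree ∧
    ((k : ℝ) - 1) / (1 - ∑ i, (1 : ℝ) / (q : ℝ) ^ (G i).natDegree) + 2 ≤ (m' : ℝ) := by
  have hq : 1 < q := hF ▸ Fintype.one_lt_card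
  obtain ⟨hm'pos, hm'lt⟩ := lt_pow_orderOf_natCast hq (hu ▸ (by omega : 0 < u))
  rw [← hu] at hm'lt
  have hku : k * u ≤ m' := by
    have := sum_natDegree_le_of_forall_dvd hGinj (fun i => (hG i).1) (fun i => (hG i).2.1)
      (X_pow_sub_C_ne_zero hm'pos 1) (fun i => (hG i).2.2.1)
    have hdeg : ((X : F[X]) ^ m' - 1).natDegree = m' := by
      simpa using natDegree_X_pow_sub_C (n := m') (r := (1 : F))
    simpa [(hG _).2.2.2, hdeg] using this
  have hsum : ∑ i, (1 : ℝ) / (q : ℝ) ^ (G i).natDegree = k / (q : ℝ) ^ u := by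
    simp [(hG _).2.2.2, div_eq_mul_inv]
  rw [hsum]
  apply one_sub_div_pos_and_sub_one_div_add_two_le
  · exact_mod_cast hm'pos
  · exact_mod_cast (by nlinarith : 2 * k ≤ m')
  · exact_mod_cast hm'lt

/-- Let `q = 3^r`, `m = m'·3^j` with `gcd(m',3) = 1` and `m' ∤ q − 1`, and let `u > 1` be the
multiplicative order of `q` modulo `m'`. If `g₁, …, g_k` are the distinct monic irreducible
factors of `x^{m'} − 1` over `F_q` of degree `u` (those not dividing the product `g` of the
factors of degree `< u`), then `Δ := 1 − Σᵢ 1/q^{deg gᵢ} > 0` and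
`Λ := (k − 1)/Δ + 2 ≤ m'`. -/
theorem lambda_le_m' (r : ℕ) (hr : 0 < r) (q : ℕ) (hq : q = 3 ^ r)
    (m m' j : ℕ) (hm : 2 ≤ m) (hmm : m = m' * 3 ^ j) (hm3 : Nat.gcd m' 3 = 1)
    (hndvd : ¬ m' ∣ q - 1)
    (F : Type*) [Field F] [Fintype F] (hF : Fintype.card F = q)
    (u : ℕ) (hu : u = orderOf (q : ZMod m')) (hu1 : 1 < u)
    (k : ℕ) (G : Fin k → Polynomial F) (hGinj : Function.Injective G)
    (hG : ∀ i, (G i).Monic ∧ Irreducible (G i) ∧ G i ∣ (X : Polynomial F) ^ m' - 1 ∧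
      (G i).natDegree = u)
    (hGall : ∀ h : Polynomial F, h.Monic → Irreducible h → h ∣ (X : Polynomial F) ^ m' - 1 →
      h.natDegree = u → ∃ i, G i = h) :
    (0 : ℝ) < 1 - ∑ i, (1 : ℝ) / (q : ℝ) ^ (G i).natDegree ∧
    ((k : ℝ) - 1) / (1 - ∑ i, (1 : ℝ) / (q : ℝ) ^ (G i).natDegree) + 2 ≤ (m' : ℝ) :=
  lambda_le_m'_general q m' F hF u hu hu1 k G hGinj hG
end
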